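/- arXiv:2011.11781 — 7 statements merged into one kernel-verified Lean document; each statement's English description precedes it below -/
import Mathlib

section
/- The matrix C = I_N + J_N Ψ is invertible if and only if ψ_n · ψ_{N-1-n} ≠ 1 for all n ∈ {0, ..., N/2 - 1} (equivalently, ψ_n ≠ 1/ψ_{N-1-n} for all such n). -/
open Matrix

/-- The `N × N` exchange (counter-identity) matrix: `(J_N)_{ij} = 1` if `i + j = N - 1`,
and `0` otherwise. -/
noncomputable def exchMat (N : ℕ) : Matrix (Fin N) (Fin N) ℝ :=
  Matrix.of fun i j => if (i : ℕ) + (j : ℕ) = N - 1 then (1 : ℝ) else 0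

lemma add_eq_iff_rev {N : ℕ} (i j : Fin N) :
    ((i : ℕ) + (j : ℕ) = N - 1) ↔ j = i.rev := by
  have hi := i.isLt; have hj := j.isLt
  constructor
  · intro h; apply Fin.ext; rw [Fin.val_rev]; omega
  · intro h; subst h; rw [Fin.val_rev]; omega

lemma rev_ne {N : ℕ} (hNe : Even N) (i : Fin N) : i.rev ≠ i := by
  obtain ⟨m, hm⟩ := hNe
  intro h
  have := congrArg Fin.val h
  rw [Fin.val_rev] at this
  have hi := i.isLt
  omega

lemma E_apply {N : ℕ} (ψ : Fin N → ℝ) (i j : Fin N) :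
    (exchMat N * Matrix.diagonal ψ) i j = if j = i.rev then ψ j else 0 := by
  rw [Matrix.mul_diagonal]
  simp only [exchMat, Matrix.of_apply, add_eq_iff_rev, ite_mul, one_mul, zero_mul]

lemma E_mulVec {N : ℕ} (ψ : Fin N → ℝ) (v : Fin N → ℝ) (i : Fin N) :
    (exchMat N * Matrix.diagonal ψ).mulVec v i = ψ i.rev * v i.rev := by
  rw [Matrix.mulVec]
  simp only [dotProduct, E_apply, ite_mul, zero_mul,
    Finset.sum_ite_eq' Finset.univ, Finset.mem_univ, if_true]

lemma E_sq {N : ℕ} (ψ : Fin N → ℝ) :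
    (exchMat N * Matrix.diagonal ψ) * (exchMat N * Matrix.diagonal ψ) =
      Matrix.diagonal (fun i => ψ i.rev * ψ i) := by
  ext i k
  rw [Matrix.mul_apply]
  simp only [E_apply, ite_mul, zero_mul, Finset.sum_ite_eq' Finset.univ i.rev,
    Finset.mem_univ, if_true, Fin.rev_rev, Matrix.diagonal_apply]
  by_cases h : k = i
  · simp [h, eq_comm]
  · have h' : ¬ i = k := fun hh => h hh.symm
    simp [h, h']

/-- The matrix `C = I_N + J_N Ψ` is invertible if and only if
`ψ_n · ψ_{N-1-n} ≠ 1` for all `n ∈ {0, …, N/2 - 1}`. -/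
theorem stmt0 (N : ℕ) (hN : 0 < N) (hNe : Even N) (ψ : Fin N → ℝ) :
    IsUnit ((1 : Matrix (Fin N) (Fin N) ℝ) + exchMat N * Matrix.diagonal ψ) ↔
      ∀ n : Fin N, (n : ℕ) < N / 2 → ψ n * ψ n.rev ≠ 1 := by
  constructor
  · rintro hC n hn hψ
    set v : Fin N → ℝ := fun j =>
      (if j = n then (1:ℝ) else 0) + (if j = n.rev then -ψ n else 0) with hv
    have hvn : v n = 1 := by
      have : ¬ n = n.rev := fun h => rev_ne hNe n h.symm
      simp [hv, this]
    have hvr : v n.rev = -ψ n := by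
      simp [hv, rev_ne hNe n]
    have hv0 : ∀ i : Fin N, i ≠ n → i ≠ n.rev → v i = 0 := by
      intro i h1 h2; simp [hv, h1, h2]
    have hker : ((1 : Matrix (Fin N) (Fin N) ℝ) + exchMat N * Matrix.diagonal ψ).mulVec v = 0 := by
      funext i
      rw [Matrix.add_mulVec, Matrix.one_mulVec]
      show v i + (exchMat N * Matrix.diagonal ψ).mulVec v i = 0
      rw [E_mulVec]
      by_cases h1 : i = n
      · subst h1
        rw [hvn, hvr]
        linear_combination -hψ
      · by_cases h2 : i = n.rev
        · subst h2
          rw [hvr, Fin.rev_rev, hvn]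
          ring
        · have h3 : i.rev ≠ n := by
            intro h; apply h2; rw [← h, Fin.rev_rev]
          have h4 : i.rev ≠ n.rev := by
            intro h; apply h1
            have := congrArg Fin.rev h; rwa [Fin.rev_rev, Fin.rev_rev] at this
          rw [hv0 i h1 h2, hv0 i.rev h3 h4]
          ring
    have hdet : IsUnit ((1 : Matrix (Fin N) (Fin N) ℝ) + exchMat N * Matrix.diagonal ψ).det :=
      (Matrix.isUnit_iff_isUnit_det _).mp hC
    have hv0' : v = 0 := by
      have h1 : ((1 : Matrix (Fin N) (Fin N) ℝ) + exchMat N * Matrix.diagonal ψ)⁻¹ *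
          ((1 : Matrix (Fin N) (Fin N) ℝ) + exchMat N * Matrix.diagonal ψ) = 1 :=
        Matrix.nonsing_inv_mul _ hdet
      calc v = Matrix.mulVec 1 v := (Matrix.one_mulVec v).symm
        _ = (((1 : Matrix (Fin N) (Fin N) ℝ) + exchMat N * Matrix.diagonal ψ)⁻¹ *
            ((1 : Matrix (Fin N) (Fin N) ℝ) + exchMat N * Matrix.diagonal ψ)).mulVec v := by
            rw [h1]
        _ = (((1 : Matrix (Fin N) (Fin N) ℝ) + exchMat N * Matrix.diagonal ψ)⁻¹).mulVec
            (((1 : Matrix (Fin N) (Fin N) ℝ) + exchMat N * Matrix.diagonal ψ).mulVec v) :=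
            (Matrix.mulVec_mulVec _ _ _).symm
        _ = 0 := by rw [hker, Matrix.mulVec_zero]
    rw [hv0'] at hvn
    simp at hvn
  · intro h
    have hd : ∀ i : Fin N, 1 - ψ i.rev * ψ i ≠ 0 := by
      intro i
      obtain ⟨m, hm⟩ := hNe
      have hi := i.isLt
      by_cases hc : (i : ℕ) < N / 2
      · have := h i hc
        intro hz; apply this; linarith
      · have hrlt : (i.rev : ℕ) < N / 2 := by rw [Fin.val_rev]; omega
        have := h i.rev hrlt
        rw [Fin.rev_rev] at this
        intro hz; apply this; linarith
    have key : ((1 : Matrix (Fin N) (Fin N) ℝ) + exchMat N * Matrix.diagonal ψ) *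
        ((1 : Matrix (Fin N) (Fin N) ℝ) - exchMat N * Matrix.diagonal ψ) =
        Matrix.diagonal (fun i => 1 - ψ i.rev * ψ i) := by
      have h1 : ((1 : Matrix (Fin N) (Fin N) ℝ) + exchMat N * Matrix.diagonal ψ) *
          ((1 : Matrix (Fin N) (Fin N) ℝ) - exchMat N * Matrix.diagonal ψ) =
          1 - (exchMat N * Matrix.diagonal ψ) * (exchMat N * Matrix.diagonal ψ) := by
        noncomm_ring
      rw [h1, E_sq]
      ext i j
      by_cases hij : i = j <;>
        simp [Matrix.diagonal_apply, hij, Matrix.one_apply, Matrix.sub_apply]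
    have hdet : IsUnit ((1 : Matrix (Fin N) (Fin N) ℝ) + exchMat N * Matrix.diagonal ψ).det := by
      have h2 := congrArg Matrix.det key
      rw [Matrix.det_mul, Matrix.det_diagonal] at h2
      have hprod : (∏ i, (1 - ψ i.rev * ψ i)) ≠ 0 :=
        Finset.prod_ne_zero_iff.mpr fun i _ => hd i
      refine isUnit_iff_ne_zero.mpr fun hz => hprod ?_
      rw [← h2, hz, zero_mul]
    exact (Matrix.isUnit_iff_isUnit_det _).mpr hdet
end

section
/- If ψ_n · ψ_{N-1-n} ≠ 1 for all n ∈ {0, ..., N/2 - 1}, then the inverse of C = I_N + J_N Ψ is given in closed form by C^{-1} = Ψ̃ (I_N - J_N Ψ), where Ψ̃ is the diagonal matrix with diagonal entries Ψ̃(n) = 1/(1 - ψ_n ψ_{N-1-n}) for n = 0, ..., N-1. -/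
open Matrix

/-!
With `K = J_N Ψ`, conjugating a diagonal matrix by `J_N` reverses its diagonal, so
`K² = diag(ψ_{N-1-n} ψ_n)` and `Ψ̃` commutes with `K` (its diagonal is reversal invariant).
Hence `(I + K) Ψ̃ (I - K) = Ψ̃ (I - K²) = I`.
-/

lemma exchMat_apply {N : ℕ} (i j : Fin N) :
    exchMat N i j = if j = i.rev then 1 else 0 := by
  have hij : (i : ℕ) + j = N - 1 ↔ j = i.rev := by
    rw [Fin.ext_iff, Fin.val_rev]
    omega
  simp [exchMat, hij]

lemma exchMat_mul_diagonal {N : ℕ} (d : Fin N → ℝ) :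
    exchMat N * diagonal d = diagonal (fun n => d n.rev) * exchMat N := by
  ext i j
  rw [mul_diagonal, diagonal_mul, exchMat_apply]
  split_ifs with h
  · simp [h]
  · simp

lemma exchMat_mul_exchMat (N : ℕ) : exchMat N * exchMat N = 1 := by
  ext i j
  simp only [mul_apply, exchMat_apply, ite_mul, one_mul, zero_mul,
    Finset.sum_ite_eq', Finset.mem_univ, if_true, one_apply, Fin.rev_rev, eq_comm]

lemma commute_exchMat_diagonal {N : ℕ} {d : Fin N → ℝ} (hd : ∀ n, d n.rev = d n) :
    Commute (exchMat N) (diagonal d) := by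
  rw [commute_iff_eq, exchMat_mul_diagonal, funext hd]

lemma exchMat_mul_diagonal_sq {N : ℕ} (d : Fin N → ℝ) :
    (exchMat N * diagonal d) * (exchMat N * diagonal d) = diagonal (fun n => d n.rev * d n) := by
  nth_rw 1 [exchMat_mul_diagonal]
  rw [mul_assoc, ← mul_assoc (exchMat N), exchMat_mul_exchMat, one_mul, diagonal_mul_diagonal]

lemma Fin.val_lt_half_or_val_rev_lt_half {N : ℕ} (hN : Even N) (n : Fin N) :
    (n : ℕ) < N / 2 ∨ (n.rev : ℕ) < N / 2 := by
  obtain ⟨k, rfl⟩ := hN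
  rw [Fin.val_rev]
  omega

theorem stmt2_general (N : ℕ) (hNe : Even N) (ψ : Fin N → ℝ)
    (hψ : ∀ n : Fin N, (n : ℕ) < N / 2 → ψ n * ψ n.rev ≠ 1) :
    ((1 : Matrix (Fin N) (Fin N) ℝ) + exchMat N * Matrix.diagonal ψ)⁻¹ =
      Matrix.diagonal (fun n => 1 / (1 - ψ n * ψ n.rev)) *
        ((1 : Matrix (Fin N) (Fin N) ℝ) - exchMat N * Matrix.diagonal ψ) := by
  have hne : ∀ n : Fin N, 1 - ψ n * ψ n.rev ≠ 0 := by
    intro n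
    rw [sub_ne_zero, ne_comm]
    rcases Fin.val_lt_half_or_val_rev_lt_half hNe n with h | h
    · exact hψ n h
    · simpa [Fin.rev_rev, mul_comm] using hψ n.rev h
  set K := exchMat N * diagonal ψ
  set T := diagonal fun n => 1 / (1 - ψ n * ψ n.rev)
  have hTK : Commute T K :=
    ((commute_exchMat_diagonal fun n => by rw [Fin.rev_rev, mul_comm]).symm).mul_right
      (commute_diagonal _ _)
  apply inv_eq_right_inv
  calc (1 + K) * (T * (1 - K)) = T * (1 - K * K) := by
        rw [← mul_assoc, ← ((Commute.one_right T).add_right hTK).eq]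
        noncomm_ring
    _ = 1 := by
        rw [exchMat_mul_diagonal_sq, ← diagonal_one, diagonal_sub, diagonal_mul_diagonal]
        congr 1
        funext n
        rw [mul_comm (ψ n.rev)]
        field_simp [hne n]

/-- If `ψ_n · ψ_{N-1-n} ≠ 1` for all `n ∈ {0, …, N/2 - 1}`, then the inverse of
`C = I_N + J_N Ψ` is `C⁻¹ = Ψ̃ (I_N - J_N Ψ)` where `Ψ̃ = diag(1/(1 - ψ_n ψ_{N-1-n}))`. -/
theorem stmt2 (N : ℕ) (hN : 0 < N) (hNe : Even N) (ψ : Fin N → ℝ)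
    (hψ : ∀ n : Fin N, (n : ℕ) < N / 2 → ψ n * ψ n.rev ≠ 1) :
    ((1 : Matrix (Fin N) (Fin N) ℝ) + exchMat N * Matrix.diagonal ψ)⁻¹ =
      Matrix.diagonal (fun n => 1 / (1 - ψ n * ψ n.rev)) *
        ((1 : Matrix (Fin N) (Fin N) ℝ) - exchMat N * Matrix.diagonal ψ) :=
  stmt2_general N hNe ψ hψ
end

section
/- The determinant of C = I_N + J_N Ψ equals the product ∏_{n=0}^{N/2-1} (1 - ψ_n · ψ_{N-1-n}). -/
open Matrix

/-- `det (I_N + J_N Ψ) = ∏_{n=0}^{N/2-1} (1 - ψ_n · ψ_{N-1-n})`. -/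
theorem stmt3 (N : ℕ) (hN : 0 < N) (hNe : Even N) (ψ : Fin N → ℝ) :
    ((1 : Matrix (Fin N) (Fin N) ℝ) + exchMat N * Matrix.diagonal ψ).det =
      ∏ n : Fin (N / 2),
        (1 - ψ (Fin.castLE (Nat.div_le_self N 2) n) *
          ψ (Fin.castLE (Nat.div_le_self N 2) n).rev) := by
  obtain ⟨m, hm⟩ := hNe
  have hNm : N = 2 * m := by omega
  have hdiv : N / 2 = m := by omega
  have hle : N / 2 ≤ N := Nat.div_le_self N 2
  set cst : Fin (N / 2) → Fin N := Fin.castLE hle with hcst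
  -- the reindexing function
  set f : Fin 2 × Fin (N / 2) → Fin N :=
    fun p => if p.1 = 0 then cst p.2 else (cst p.2).rev with hf
  have hval0 : ∀ k : Fin (N / 2), ((cst k : Fin N) : ℕ) = (k : ℕ) := fun k => rfl
  have hval1 : ∀ k : Fin (N / 2), (((cst k).rev : Fin N) : ℕ) = N - ((k : ℕ) + 1) := by
    intro k
    rw [Fin.val_rev, hval0]
  have hvalf : ∀ (u : Fin 2) (j : Fin (N / 2)),
      ((f (u, j) : Fin N) : ℕ) = if u = 0 then (j : ℕ) else N - ((j : ℕ) + 1) := by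
    intro u j
    by_cases hu : u = 0 <;> simp [hf, hu, Fin.val_rev, hval0]
  have hinj : Function.Injective f := by
    rintro ⟨s, k⟩ ⟨t, l⟩ h
    have hk : (k : ℕ) < N / 2 := k.2
    have hl : (l : ℕ) < N / 2 := l.2
    have hv := congrArg Fin.val h
    rw [hvalf, hvalf] at hv
    have hst : s = t := by
      by_cases hs : s = 0 <;> by_cases ht : t = 0
      · rw [hs, ht]
      · exfalso; rw [if_pos hs, if_neg ht] at hv; omega
      · exfalso; rw [if_neg hs, if_pos ht] at hv; omega
      · have hs' : (s : ℕ) ≠ 0 := fun hh => hs (Fin.ext hh)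
        have ht' : (t : ℕ) ≠ 0 := fun hh => ht (Fin.ext hh)
        have := s.2; have := t.2
        exact Fin.ext (by omega)
    subst hst
    refine Prod.ext rfl (Fin.ext ?_)
    show (k : ℕ) = (l : ℕ)
    by_cases hs : s = 0
    · rw [if_pos hs, if_pos hs] at hv; omega
    · rw [if_neg hs, if_neg hs] at hv; omega
  have hcard : Fintype.card (Fin 2 × Fin (N / 2)) = Fintype.card (Fin N) := by
    simp; omega
  have hbij : Function.Bijective f :=
    (Fintype.bijective_iff_injective_and_card f).mpr ⟨hinj, hcard⟩
  set e : Fin 2 × Fin (N / 2) ≃ Fin N := Equiv.ofBijective f hbij with he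
  set C : Matrix (Fin N) (Fin N) ℝ :=
    (1 : Matrix (Fin N) (Fin N) ℝ) + exchMat N * Matrix.diagonal ψ with hC
  have hentry : ∀ i j : Fin N,
      C i j = (if i = j then (1 : ℝ) else 0) +
        (if (i : ℕ) + (j : ℕ) = N - 1 then ψ j else 0) := by
    intro i j
    simp [hC, Matrix.add_apply, Matrix.one_apply, Matrix.mul_diagonal, exchMat, ite_mul]
  have hsub : C.submatrix e e =
      Matrix.blockDiagonal (fun k : Fin (N / 2) =>
        !![(1 : ℝ), ψ ((cst k).rev); ψ (cst k), 1]) := by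
    ext ⟨s, k⟩ ⟨t, l⟩
    have hk : (k : ℕ) < N / 2 := k.2
    have hl : (l : ℕ) < N / 2 := l.2
    have hk' : ((cst k : Fin N) : ℕ) = (k : ℕ) := rfl
    have hl' : ((cst l : Fin N) : ℕ) = (l : ℕ) := rfl
    rw [Matrix.submatrix_apply, Matrix.blockDiagonal_apply]
    have hef : ∀ p, e p = f p := fun p => rfl
    rw [hef, hef, hentry]
    fin_cases s <;> fin_cases t <;>
      simp only [hf, reduceIte, Fin.isValue, Matrix.cons_val', Matrix.cons_val_zero,
        Matrix.cons_val_one, Matrix.head_cons, Matrix.empty_val', Matrix.cons_val_fin_one,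
        Matrix.head_fin_const, Fin.zero_eta, Fin.mk_one]
    · -- (0,k) (0,l)
      have h1 : ¬ ((cst k : ℕ) + (cst l : ℕ) = N - 1) := by
        rw [hk', hl']; omega
      by_cases hkl : k = l
      · subst hkl; simp [h1]
      · have : cst k ≠ cst l := fun h => hkl (Fin.ext (by
          have := congrArg Fin.val h; rwa [hk', hl'] at this))
        simp [h1, this, hkl]
    · -- (0,k) (1,l)
      have hne : cst k ≠ (cst l).rev := fun h => by
        have := congrArg Fin.val h; rw [hk', hval1] at this; omega
      by_cases hkl : k = l
      · subst hkl
        have hsum : (cst k : ℕ) + (N - ((cst k : ℕ) + 1)) = N - 1 := by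
          rw [hk']; omega
        simp [hne, hsum]
      · have hsum : ¬ ((cst k : ℕ) + (N - ((cst l : ℕ) + 1)) = N - 1) := by
          rw [hk', hl']; intro h
          exact hkl (Fin.ext (by omega))
        simp [hne, hsum, hkl]
    · -- (1,k) (0,l)
      have hne : (cst k).rev ≠ cst l := fun h => by
        have := congrArg Fin.val h; rw [hl', hval1] at this; omega
      by_cases hkl : k = l
      · subst hkl
        have hsum : (N - ((cst k : ℕ) + 1)) + (cst k : ℕ) = N - 1 := by
          rw [hk']; omega
        simp [hne, hsum]
      · have hsum : ¬ ((N - ((cst k : ℕ) + 1)) + (cst l : ℕ) = N - 1) := by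
          rw [hk', hl']; intro h
          exact hkl (Fin.ext (by omega))
        simp [hne, hsum, hkl]
    · -- (1,k) (1,l)
      have h1 : ¬ ((N - ((cst k : ℕ) + 1)) + (N - ((cst l : ℕ) + 1)) = N - 1) := by
        rw [hk', hl']; omega
      by_cases hkl : k = l
      · subst hkl; simp [h1]
      · have : (cst k).rev ≠ (cst l).rev := fun h => hkl (Fin.ext (by
          have := congrArg Fin.val h; rw [hval1, hval1] at this; omega))
        simp [h1, this, hkl]
  have hdet : C.det = ∏ k : Fin (N / 2),
      (!![(1 : ℝ), ψ ((cst k).rev); ψ (cst k), 1]).det := by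
    rw [← Matrix.det_submatrix_equiv_self e C, hsub, Matrix.det_blockDiagonal]
  rw [hdet]
  refine Finset.prod_congr rfl fun k _ => ?_
  rw [Matrix.det_fin_two_of]
  ring
end

section
/- For any real diagonal matrix Ψ, the matrix C = I_N + J_N Ψ has rank at least N/2. -/
/-!
Two indices below `N / 2` never sum to `N - 1`, so the leading `N / 2 × N / 2` block of
`C = 1 + J_N Ψ` misses the antidiagonal and is the identity; a submatrix has rank at most
that of the whole matrix.
-/

open Matrix

theorem one_add_exchMat_mul_diagonal_submatrix_castLE_half (N : ℕ) (ψ : Fin N → ℝ) :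
    ((1 : Matrix (Fin N) (Fin N) ℝ) + exchMat N * diagonal ψ).submatrix
      (Fin.castLE (N.div_le_self 2)) (Fin.castLE (N.div_le_self 2)) = 1 := by
  ext i j
  have hi := i.isLt
  have hj := j.isLt
  have hsum : (i : ℕ) + j ≠ N - 1 := by omega
  simp [exchMat, mul_diagonal, one_apply, Fin.ext_iff, hsum]

theorem stmt4_general (N : ℕ) (ψ : Fin N → ℝ) :
    N / 2 ≤ ((1 : Matrix (Fin N) (Fin N) ℝ) + exchMat N * Matrix.diagonal ψ).rank :=
  calc N / 2 = (1 : Matrix (Fin (N / 2)) (Fin (N / 2)) ℝ).rank := by simp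
    _ ≤ _ := one_add_exchMat_mul_diagonal_submatrix_castLE_half N ψ ▸ rank_submatrix_le _ _ _

/-- For any real diagonal matrix `Ψ`, the matrix `C = I_N + J_N Ψ` has rank at least `N/2`. -/
theorem stmt4 (N : ℕ) (hN : 0 < N) (hNe : Even N) (ψ : Fin N → ℝ) :
    N / 2 ≤ ((1 : Matrix (Fin N) (Fin N) ℝ) + exchMat N * Matrix.diagonal ψ).rank :=
  stmt4_general N ψ
end

section
/- If ψ_n · ψ_{N-1-n} ≠ 1 for all n ∈ {0, ..., N/2 - 1}, then the inverse C^{-1} of C = I_N + J_N Ψ is sparse: its (i,j) entry is zero whenever j ∉ {i, N-1-i}; moreover C^{-1}(i,i) = 1/(1 - ψ_i ψ_{N-1-i}) and C^{-1}(i, N-1-i) = -ψ_{N-1-i}/(1 - ψ_i ψ_{N-1-i}). -/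
/-!
`J_N` is the permutation matrix `P` of the involution `i ↦ N - 1 - i`. For any involution `σ`
with permutation matrix `P` and any diagonal `D = diag d`, the matrix `A = P D` squares to the
diagonal matrix `diag (d i * d (σ i))`, so `(1 - A) (1 + A) = diag (1 - d i * d (σ i))`. Hence
`(1 + A)⁻¹ = diag (1 - d i * d (σ i))⁻¹ * (1 - A)`, whose row `i` is supported on `{i, σ i}`.
When `N` is even, `i ↦ N - 1 - i` has no fixed points, so the two entries do not interfere.
-/

open Matrix

namespace Matrix

variable {ι R : Type*} [Fintype ι] [DecidableEq ι]

theorem permMatrix_mul_diagonal_apply [NonAssocSemiring R] (σ : Equiv.Perm ι) (d : ι → R)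
    (i j : ι) :
    (σ.permMatrix R * diagonal d) i j = if σ i = j then d j else 0 := by
  simp [PEquiv.toMatrix_apply]

theorem permMatrix_mul_diagonal_mul_self [CommSemiring R] {σ : Equiv.Perm ι}
    (hσ : Function.Involutive σ) (d : ι → R) :
    σ.permMatrix R * diagonal d * (σ.permMatrix R * diagonal d) =
      diagonal fun i => d i * d (σ i) := by
  ext i j
  rw [mul_apply, Fintype.sum_eq_single (σ i)]
  · rw [permMatrix_mul_diagonal_apply, permMatrix_mul_diagonal_apply, if_pos rfl, hσ i,
      diagonal_apply]
    split_ifs with h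
    · rw [h, mul_comm]
    · exact mul_zero _
  · intro k hk
    rw [permMatrix_mul_diagonal_apply, if_neg (Ne.symm hk), zero_mul]

theorem inv_one_add_permMatrix_mul_diagonal [Field R] {σ : Equiv.Perm ι}
    (hσ : Function.Involutive σ) {d : ι → R} (hd : ∀ i, 1 - d i * d (σ i) ≠ 0) :
    (1 + σ.permMatrix R * diagonal d)⁻¹ =
      diagonal (fun i => (1 - d i * d (σ i))⁻¹) * (1 - σ.permMatrix R * diagonal d) := by
  refine inv_eq_left_inv ?_
  have hsq : (1 - σ.permMatrix R * diagonal d) * (1 + σ.permMatrix R * diagonal d) =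
      diagonal fun i => 1 - d i * d (σ i) := by
    rw [← diagonal_one, ← diagonal_sub, diagonal_one, ← permMatrix_mul_diagonal_mul_self hσ]
    noncomm_ring
  rw [mul_assoc, hsq, diagonal_mul_diagonal, ← diagonal_one]
  exact congrArg diagonal (funext fun i => inv_mul_cancel₀ (hd i))

theorem inv_one_add_permMatrix_mul_diagonal_apply [Field R] {σ : Equiv.Perm ι}
    (hσ : Function.Involutive σ) {d : ι → R} (hd : ∀ i, 1 - d i * d (σ i) ≠ 0) (i j : ι) :
    (1 + σ.permMatrix R * diagonal d)⁻¹ i j =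
      ((if i = j then 1 else 0) - if σ i = j then d j else 0) / (1 - d i * d (σ i)) := by
  rw [inv_one_add_permMatrix_mul_diagonal hσ hd, diagonal_mul, sub_apply, one_apply,
    permMatrix_mul_diagonal_apply, div_eq_inv_mul]

end Matrix

theorem exchMat_eq_permMatrix (N : ℕ) : exchMat N = Fin.revPerm.permMatrix ℝ := by
  ext i j
  simp only [exchMat, of_apply, PEquiv.toMatrix_apply, Equiv.toPEquiv_apply, Option.mem_def,
    Option.some.injEq, Fin.revPerm_apply, Fin.ext_iff, Fin.val_rev]
  congr 1
  apply propext
  omega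

theorem Fin.rev_ne_self {N : ℕ} (hN : Even N) (i : Fin N) : i.rev ≠ i := by
  obtain ⟨m, rfl⟩ := hN
  simp only [ne_eq, Fin.ext_iff, Fin.val_rev]
  omega

theorem one_sub_mul_rev_ne_zero {N : ℕ} (hN : Even N) {ψ : Fin N → ℝ}
    (hψ : ∀ n : Fin N, (n : ℕ) < N / 2 → ψ n * ψ n.rev ≠ 1) (i : Fin N) :
    1 - ψ i * ψ i.rev ≠ 0 := by
  rw [sub_ne_zero, ne_comm]
  rcases lt_or_ge (i : ℕ) (N / 2) with hi | hi
  · exact hψ i hi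
  · have hrev : (i.rev : ℕ) < N / 2 := by
      obtain ⟨m, rfl⟩ := hN
      rw [Fin.val_rev]
      omega
    simpa only [Fin.rev_rev, mul_comm] using hψ i.rev hrev

theorem stmt5_general (N : ℕ) (hNe : Even N) (ψ : Fin N → ℝ)
    (hψ : ∀ n : Fin N, (n : ℕ) < N / 2 → ψ n * ψ n.rev ≠ 1) :
    (∀ i j : Fin N, j ≠ i → j ≠ i.rev →
      ((1 : Matrix (Fin N) (Fin N) ℝ) + exchMat N * Matrix.diagonal ψ)⁻¹ i j = 0) ∧
    (∀ i : Fin N,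
      ((1 : Matrix (Fin N) (Fin N) ℝ) + exchMat N * Matrix.diagonal ψ)⁻¹ i i =
        1 / (1 - ψ i * ψ i.rev)) ∧
    (∀ i : Fin N,
      ((1 : Matrix (Fin N) (Fin N) ℝ) + exchMat N * Matrix.diagonal ψ)⁻¹ i i.rev =
        -ψ i.rev / (1 - ψ i * ψ i.rev)) := by
  have hinv := inv_one_add_permMatrix_mul_diagonal_apply (σ := Fin.revPerm) Fin.rev_involutive
    (one_sub_mul_rev_ne_zero hNe hψ)
  simp only [Fin.revPerm_apply] at hinv
  rw [exchMat_eq_permMatrix]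
  refine ⟨fun i j hji hjr => ?_, fun i => ?_, fun i => ?_⟩ <;> rw [hinv]
  · rw [if_neg (Ne.symm hji), if_neg (Ne.symm hjr), sub_zero, zero_div]
  · rw [if_pos rfl, if_neg (Fin.rev_ne_self hNe i), sub_zero]
  · rw [if_neg (Fin.rev_ne_self hNe i).symm, if_pos rfl, zero_sub]

/-- If `ψ_n · ψ_{N-1-n} ≠ 1` for all `n ∈ {0, …, N/2 - 1}`, then `C⁻¹` is sparse:
its `(i,j)` entry vanishes whenever `j ∉ {i, N-1-i}`, while
`C⁻¹(i,i) = 1/(1 - ψ_i ψ_{N-1-i})` and `C⁻¹(i, N-1-i) = -ψ_{N-1-i}/(1 - ψ_i ψ_{N-1-i})`. -/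
theorem stmt5 (N : ℕ) (hN : 0 < N) (hNe : Even N) (ψ : Fin N → ℝ)
    (hψ : ∀ n : Fin N, (n : ℕ) < N / 2 → ψ n * ψ n.rev ≠ 1) :
    (∀ i j : Fin N, j ≠ i → j ≠ i.rev →
      ((1 : Matrix (Fin N) (Fin N) ℝ) + exchMat N * Matrix.diagonal ψ)⁻¹ i j = 0) ∧
    (∀ i : Fin N,
      ((1 : Matrix (Fin N) (Fin N) ℝ) + exchMat N * Matrix.diagonal ψ)⁻¹ i i =
        1 / (1 - ψ i * ψ i.rev)) ∧
    (∀ i : Fin N,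
      ((1 : Matrix (Fin N) (Fin N) ℝ) + exchMat N * Matrix.diagonal ψ)⁻¹ i i.rev =
        -ψ i.rev / (1 - ψ i * ψ i.rev)) :=
  stmt5_general N hNe ψ hψ
end

section
/- If U₀ is an N×N real orthogonal matrix, ψ_n · ψ_{N-1-n} ≠ 1 for all n ∈ {0, ..., N/2 - 1}, and M is an N×N real matrix such that U₀ M (I_N + J_N Ψ) U₀ᵀ = I_N, then M = Ψ̃ (I_N - J_N Ψ), where Ψ̃ = diag(1/(1 - ψ_n ψ_{N-1-n}))_{n=0}^{N-1}; i.e., the synthesis kernel achieving perfect reconstruction is unique and equals (I_N + J_N Ψ)^{-1}. -/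
open Matrix

lemma exch_diag_sq (N : ℕ) (ψ : Fin N → ℝ) :
    (exchMat N * Matrix.diagonal ψ) * (exchMat N * Matrix.diagonal ψ) =
    Matrix.diagonal (fun i => ψ i.rev * ψ i) := by
  have hrev : ∀ a b : Fin N, ((a : ℕ) + (b : ℕ) = N - 1) ↔ b = a.rev := by
    intro a b; have := a.isLt; have := b.isLt
    constructor
    · intro h; apply Fin.ext; simp [Fin.val_rev]; omega
    · rintro rfl; simp [Fin.val_rev]; omega
  have hAentry : ∀ i j : Fin N,
      (exchMat N * Matrix.diagonal ψ) i j = if j = i.rev then ψ j else 0 := by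
    intro i j
    rw [Matrix.mul_diagonal]
    simp [exchMat, hrev, ite_mul]
  ext i k
  rw [Matrix.mul_apply]
  simp only [hAentry]
  rw [Finset.sum_eq_single i.rev]
  · by_cases h : k = i
    · subst h; simp [Fin.rev_rev, Matrix.diagonal_apply]
    · simp [Fin.rev_rev, h, Matrix.diagonal_apply, Ne.symm h]
  · intro j _ hj; simp [hj]
  · intro h; exact absurd (Finset.mem_univ _) h

/-- Uniqueness of the synthesis kernel achieving perfect reconstruction: if `U₀` is
orthogonal, `ψ_n ψ_{N-1-n} ≠ 1` for all `n < N/2`, and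
`U₀ M (I_N + J_N Ψ) U₀ᵀ = I_N`, then `M = Ψ̃ (I_N - J_N Ψ)`. -/
theorem stmt12 (N : ℕ) (hN : 0 < N) (hNe : Even N) (ψ : Fin N → ℝ)
    (U0 : Matrix (Fin N) (Fin N) ℝ) (hU0 : U0 * U0ᵀ = 1) (hU0' : U0ᵀ * U0 = 1)
    (hψ : ∀ n : Fin N, (n : ℕ) < N / 2 → ψ n * ψ n.rev ≠ 1)
    (M : Matrix (Fin N) (Fin N) ℝ)
    (hM : U0 * M * ((1 : Matrix (Fin N) (Fin N) ℝ) + exchMat N * Matrix.diagonal ψ) * U0ᵀ = 1) :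
    M = Matrix.diagonal (fun n => 1 / (1 - ψ n * ψ n.rev)) *
        ((1 : Matrix (Fin N) (Fin N) ℝ) - exchMat N * Matrix.diagonal ψ) := by
  set A := exchMat N * Matrix.diagonal ψ with hA
  set B := (1 : Matrix (Fin N) (Fin N) ℝ) + A with hBdef
  set C := Matrix.diagonal (fun n : Fin N => 1 / (1 - ψ n * ψ n.rev)) *
      ((1 : Matrix (Fin N) (Fin N) ℝ) - A) with hCdef
  -- all factors 1 - ψ n ψ n.rev are nonzero
  have hne : ∀ n : Fin N, 1 - ψ n * ψ n.rev ≠ 0 := by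
    intro n
    by_cases h : (n : ℕ) < N / 2
    · have := hψ n h; intro hc; apply this; linarith
    · have hrev : ((n.rev : ℕ)) < N / 2 := by
        have := n.isLt; have h2 := Nat.div_mul_cancel hNe.two_dvd
        simp [Fin.val_rev]; omega
      have := hψ n.rev hrev
      rw [Fin.rev_rev] at this
      intro hc; apply this; nlinarith [hc]
  -- M * B = 1
  have hMB : M * B = 1 := by
    have h2 := congrArg (fun X => U0ᵀ * X * U0) hM
    simp only [Matrix.mul_assoc, hU0', Matrix.mul_one, Matrix.one_mul] at h2
    calc M * B = (U0ᵀ * U0) * (M * B) := by rw [hU0', Matrix.one_mul]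
    _ = U0ᵀ * (U0 * (M * B)) := by rw [Matrix.mul_assoc]
    _ = 1 := h2
  -- C * B = 1
  have hCB : C * B = 1 := by
    have expand : ((1 : Matrix (Fin N) (Fin N) ℝ) - A) * B =
        Matrix.diagonal (fun n : Fin N => 1 - ψ n * ψ n.rev) := by
      have h1 : ((1 : Matrix (Fin N) (Fin N) ℝ) - A) * B = 1 - A * A := by
        rw [hBdef]; noncomm_ring
      rw [h1, hA, exch_diag_sq]
      ext i j
      by_cases h : i = j <;>
        simp [Matrix.sub_apply, Matrix.one_apply, Matrix.diagonal_apply, h, mul_comm]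
    rw [hCdef, Matrix.mul_assoc, expand, Matrix.diagonal_mul_diagonal]
    have h3 : (fun i : Fin N => 1 / (1 - ψ i * ψ i.rev) * (1 - ψ i * ψ i.rev)) =
        fun _ => (1 : ℝ) := by
      funext i
      rw [one_div, inv_mul_cancel₀ (hne i)]
    rw [h3, Matrix.diagonal_one]
  -- conclude
  have hBC : B * C = 1 := mul_eq_one_comm.mp hCB
  calc M = M * (B * C) := by rw [hBC, Matrix.mul_one]
  _ = (M * B) * C := by rw [Matrix.mul_assoc]
  _ = C := by rw [hMB, Matrix.one_mul]
end

section
/- Butterworth filter invertibility: let 0 ≤ λ_0 ≤ λ_1 ≤ ... ≤ λ_{N-1} be real numbers with λ_{N/2} > 0, let λ_cut > 0, let β be a positive integer, and set ψ_n = 2(1 + (λ_n/λ_cut)^{2β})^{-1/2} - 1. Then ψ_n · ψ_{N-1-n} ≠ 1 for all n ∈ {0, ..., N/2 - 1}, and hence C = I_N + J_N Ψ is invertible, i.e., the perfect reconstruction condition is satisfied. -/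
/-!
The entries of `Ψ` lie in `[-1, 1]`, and lie strictly inside it wherever `λ_n > 0`, which by
monotonicity holds for every `n ≥ N/2`. Of the two indices `n` and `N-1-n` one is `≥ N/2`, so
`|ψ_n ψ_{N-1-n}| < 1`. Since `J_N Ψ` only couples the coordinates `n` and `N-1-n`, a vector `v`
with `C v = 0` satisfies `v_n = ψ_n ψ_{N-1-n} v_n`, hence `v = 0`.
-/

open Matrix

lemma exchMat_mulVec {N : ℕ} (v : Fin N → ℝ) (i : Fin N) : (exchMat N *ᵥ v) i = v i.rev := by
  have hrev : ∀ j : Fin N, (i : ℕ) + j = N - 1 ↔ i.rev = j := fun j => by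
    rw [Fin.ext_iff, Fin.val_rev]; omega
  simp only [exchMat, mulVec, dotProduct, of_apply, hrev, ite_mul, one_mul, zero_mul,
    Finset.sum_ite_eq, Finset.mem_univ, if_true]

theorem isUnit_one_add_exchMat_mul_diagonal {N : ℕ} (ψ : Fin N → ℝ)
    (h : ∀ i, ψ i * ψ i.rev ≠ 1) : IsUnit (1 + exchMat N * diagonal ψ) := by
  rw [isUnit_iff_isUnit_det, isUnit_iff_ne_zero, Ne, ← exists_mulVec_eq_zero_iff]
  rintro ⟨v, hv0, hv⟩
  have hcoord : ∀ j, v j + ψ j.rev * v j.rev = 0 := fun j => by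
    simpa [add_mulVec, ← mulVec_mulVec, exchMat_mulVec, mulVec_diagonal] using congrFun hv j
  refine hv0 (funext fun i => ?_)
  have hi := hcoord i
  have hri := hcoord i.rev
  rw [Fin.rev_rev] at hri
  have : (1 - ψ i * ψ i.rev) * v i = 0 := by linear_combination hi - ψ i.rev * hri
  exact (mul_eq_zero.1 this).resolve_left (sub_ne_zero.2 (h i).symm)

lemma abs_two_mul_one_add_rpow_neg_half_sub_one_le {x : ℝ} (hx : 0 ≤ x) :
    |2 * (1 + x) ^ (-(1 / 2) : ℝ) - 1| ≤ 1 := by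
  have hpos : 0 < (1 + x) ^ (-(1 / 2) : ℝ) := Real.rpow_pos_of_pos (by linarith) _
  have hle : (1 + x) ^ (-(1 / 2) : ℝ) ≤ 1 :=
    Real.rpow_le_one_of_one_le_of_nonpos (by linarith) (by norm_num)
  rw [abs_le]; constructor <;> linarith

lemma abs_two_mul_one_add_rpow_neg_half_sub_one_lt {x : ℝ} (hx : 0 < x) :
    |2 * (1 + x) ^ (-(1 / 2) : ℝ) - 1| < 1 := by
  have hpos : 0 < (1 + x) ^ (-(1 / 2) : ℝ) := Real.rpow_pos_of_pos (by linarith) _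
  have hlt : (1 + x) ^ (-(1 / 2) : ℝ) < 1 :=
    Real.rpow_lt_one_of_one_lt_of_neg (by linarith) (by norm_num)
  rw [abs_lt]; constructor <;> linarith

lemma mul_ne_one_of_abs_le_one_of_abs_lt_one {a b : ℝ} (ha : |a| ≤ 1) (hb : |b| < 1) :
    a * b ≠ 1 := by
  intro hab
  have : |a * b| < 1 := by
    rw [abs_mul]; exact mul_lt_one_of_nonneg_of_lt_one_right ha (abs_nonneg b) hb
  rw [hab, abs_one] at this
  exact lt_irrefl 1 this

lemma Fin.half_le_val_or_half_le_val_rev {N : ℕ} (n : Fin N) : N / 2 ≤ n ∨ N / 2 ≤ n.rev := by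
  rw [Fin.val_rev]; omega

/-- Butterworth filter invertibility: for `0 ≤ λ_0 ≤ … ≤ λ_{N-1}` with `λ_{N/2} > 0`,
`λ_cut > 0`, a positive integer `β`, and `ψ_n = 2 (1 + (λ_n/λ_cut)^(2β))^(-1/2) - 1`,
we have `ψ_n ψ_{N-1-n} ≠ 1` for all `n < N/2`, hence `C = I_N + J_N Ψ` is invertible. -/
theorem stmt16 (N : ℕ) (hN : 0 < N)
    (lam : Fin N → ℝ) (hmono : Monotone lam)
    (hmid : 0 < lam ⟨N / 2, by omega⟩)
    (lcut : ℝ) (hcut : 0 < lcut) (β : ℕ)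
    (ψ : Fin N → ℝ)
    (hψ : ∀ n : Fin N, ψ n = 2 * (1 + (lam n / lcut) ^ (2 * β)) ^ (-(1 / 2) : ℝ) - 1) :
    (∀ n : Fin N, (n : ℕ) < N / 2 → ψ n * ψ n.rev ≠ 1) ∧
    IsUnit ((1 : Matrix (Fin N) (Fin N) ℝ) + exchMat N * Matrix.diagonal ψ) := by
  have habs_le : ∀ n, |ψ n| ≤ 1 := fun n => by
    rw [hψ n]
    exact abs_two_mul_one_add_rpow_neg_half_sub_one_le ((even_two_mul β).pow_nonneg _)
  have habs_lt : ∀ n : Fin N, N / 2 ≤ n → |ψ n| < 1 := fun n hn => by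
    have hlam : 0 < lam n := hmid.trans_le (hmono (Fin.le_def.2 hn))
    rw [hψ n]
    exact abs_two_mul_one_add_rpow_neg_half_sub_one_lt (pow_pos (div_pos hlam hcut) _)
  have hprod : ∀ n, ψ n * ψ n.rev ≠ 1 := fun n => by
    rcases n.half_le_val_or_half_le_val_rev with hn | hn
    · rw [mul_comm]
      exact mul_ne_one_of_abs_le_one_of_abs_lt_one (habs_le _) (habs_lt n hn)
    · exact mul_ne_one_of_abs_le_one_of_abs_lt_one (habs_le n) (habs_lt _ hn)
  exact ⟨fun n _ => hprod n, isUnit_one_add_exchMat_mul_diagonal ψ hprod⟩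
end
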